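/- arXiv:2601.17626 — 5 statements merged into one kernel-verified Lean document; each statement's English description precedes it below -/
import Mathlib

section
/- Let k ≥ 0 and n = k+1. For any α_0,…,α_k ∈ ℂ and a, b ∈ ℂ^n, setting p(x,y) = Σ_{i=0}^k α_i x^{k-i} y^i, we have det([p(a_r,b_s)]_{r,s=1}^n) = (-1)^{C(k+1,2)} · (Π_{i=0}^k α_i) · Π_{1≤i<j≤n}(a_j - a_i) · Π_{1≤i<j≤n}(b_j - b_i). -/
/-!
The matrix factors as `P * diagonal α * (vandermonde b)ᵀ`, where `P r i = a r ^ (k - i)` is the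
Vandermonde matrix of `a` with its columns reversed, i.e. the projective Vandermonde matrix of
`(1, a)`. Its determinant is `∏_{i<j} (a i - a j)`, and flipping the `C(k+1, 2)` factors gives the
sign.
-/

open Finset Matrix

theorem Finset.prod_prod_ite_lt_eq_prod_prod_Ioi {ι M : Type*} [Fintype ι] [LinearOrder ι]
    [LocallyFiniteOrderTop ι] [CommMonoid M] (f : ι → ι → M) :
    ∏ i, ∏ j, (if i < j then f i j else 1) = ∏ i, ∏ j ∈ Ioi i, f i j := by
  refine prod_congr rfl fun i _ => ?_
  rw [← prod_filter, filter_lt_eq_Ioi]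

theorem Fin.sum_card_Ioi (n : ℕ) : ∑ i : Fin n, #(Ioi i) = n.choose 2 := by
  simp only [Fin.card_Ioi]
  rw [Fin.sum_univ_eq_sum_range (fun i => n - 1 - i), sum_range_reflect (fun i => i),
    sum_range_id, Nat.choose_two_right]

theorem Fin.prod_prod_Ioi_sub_comm {R : Type*} [CommRing R] {n : ℕ} (v : Fin n → R) :
    ∏ i, ∏ j ∈ Ioi i, (v i - v j) = (-1) ^ n.choose 2 * ∏ i, ∏ j ∈ Ioi i, (v j - v i) := by
  calc ∏ i, ∏ j ∈ Ioi i, (v i - v j) = ∏ i, ∏ j ∈ Ioi i, -(v j - v i) := by simp only [neg_sub]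
    _ = (-1) ^ n.choose 2 * ∏ i, ∏ j ∈ Ioi i, (v j - v i) := by
      simp only [prod_neg, prod_mul_distrib, prod_pow_eq_pow_sum, Fin.sum_card_Ioi]

namespace Matrix

variable {R : Type*} [CommRing R] {n : ℕ}

theorem of_sum_mul_pow_rev_mul_pow_eq (α a b : Fin n → R) :
    of (fun r s => ∑ i, α i * a r ^ (i.rev : ℕ) * b s ^ (i : ℕ)) =
      projVandermonde 1 a * diagonal α * (vandermonde b)ᵀ := by
  ext r s
  simp only [mul_apply (M := _ * diagonal α), mul_diagonal, of_apply, transpose_apply,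
    projVandermonde, rectVandermonde_apply, vandermonde_apply, Pi.one_apply, one_pow, one_mul]
  exact sum_congr rfl fun i _ => by ring

theorem det_of_sum_mul_pow_rev_mul_pow (α a b : Fin n → R) :
    det (of fun r s => ∑ i, α i * a r ^ (i.rev : ℕ) * b s ^ (i : ℕ)) =
      (∏ i, α i) * (∏ i, ∏ j ∈ Ioi i, (a i - a j)) * ∏ i, ∏ j ∈ Ioi i, (b j - b i) := by
  rw [of_sum_mul_pow_rev_mul_pow_eq, det_mul, det_mul, det_projVandermonde, det_diagonal,
    det_transpose, det_vandermonde]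
  simp only [Pi.one_apply, one_mul]
  ring

end Matrix

theorem stmt_3 (k : ℕ) (α : Fin (k + 1) → ℂ) (a b : Fin (k + 1) → ℂ) :
    Matrix.det (Matrix.of fun r s : Fin (k + 1) =>
        ∑ i : Fin (k + 1), α i * a r ^ (k - (i : ℕ)) * b s ^ (i : ℕ)) =
      (-1 : ℂ) ^ ((k + 1).choose 2) * (∏ i : Fin (k + 1), α i) *
        (∏ i : Fin (k + 1), ∏ j : Fin (k + 1), if i < j then a j - a i else 1) *
        (∏ i : Fin (k + 1), ∏ j : Fin (k + 1), if i < j then b j - b i else 1) := by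
  have hrev (i : Fin (k + 1)) : k - (i : ℕ) = (i.rev : ℕ) := by simp [Fin.val_rev]
  simp_rw [hrev, det_of_sum_mul_pow_rev_mul_pow, prod_prod_ite_lt_eq_prod_prod_Ioi,
    Fin.prod_prod_Ioi_sub_comm a]
  ring
end

section
/- Let k ≥ 0 and n = k+1 with p(x,y) = Σ_{i=0}^k α_i x^{k-i} y^i, α_i ∈ ℂ, and a, b ∈ ℂ^n. Then det([p(a_r,b_s)]_{r,s}) ≠ 0 if and only if α_i ≠ 0 for all 0 ≤ i ≤ k, the entries a_1,…,a_n are pairwise distinct, and the entries b_1,…,b_n are pairwise distinct. -/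
/-!
The evaluation matrix factors as `V(a)' · diag(α) · V(b)ᵀ`, where `V` is the Vandermonde matrix
and `V(a)'` is `V(a)` with its columns reversed. Its determinant is therefore
`± det V(a) · ∏ αᵢ · det V(b)`, and a Vandermonde determinant vanishes exactly when two nodes
coincide.
-/

open Matrix

section HomogeneousEvaluation

variable {R : Type*} [CommRing R] {k : ℕ}

theorem of_sum_mul_pow_mul_pow_eq_vandermonde_mul (α a b : Fin (k + 1) → R) :
    (of fun r s : Fin (k + 1) => ∑ i : Fin (k + 1), α i * a r ^ (k - (i : ℕ)) * b s ^ (i : ℕ)) =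
      (vandermonde a).submatrix id Fin.revPerm * diagonal α * (vandermonde b)ᵀ := by
  ext r s
  simp only [of_apply, mul_apply, diagonal, submatrix_apply, id_eq, vandermonde_apply,
    Fin.revPerm_apply, Fin.val_rev, transpose_apply, mul_ite, mul_zero,
    Finset.sum_ite_eq', Finset.mem_univ, if_true]
  refine Finset.sum_congr rfl fun i _ => ?_
  rw [show k + 1 - (i + 1 : ℕ) = k - i by omega, mul_comm (α i)]

theorem det_of_sum_mul_pow_mul_pow (α a b : Fin (k + 1) → R) :
    (of fun r s : Fin (k + 1) => ∑ i : Fin (k + 1), α i * a r ^ (k - (i : ℕ)) * b s ^ (i : ℕ)).det =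
      Equiv.Perm.sign (Fin.revPerm : Equiv.Perm (Fin (k + 1))) *
        (vandermonde a).det * (∏ i, α i) * (vandermonde b).det := by
  rw [of_sum_mul_pow_mul_pow_eq_vandermonde_mul, det_mul, det_mul, det_permute',
    det_transpose, det_diagonal]

theorem det_of_sum_mul_pow_mul_pow_ne_zero_iff [IsDomain R] (α a b : Fin (k + 1) → R) :
    (of fun r s : Fin (k + 1) =>
        ∑ i : Fin (k + 1), α i * a r ^ (k - (i : ℕ)) * b s ^ (i : ℕ)).det ≠ 0 ↔
      (∀ i, α i ≠ 0) ∧ Function.Injective a ∧ Function.Injective b := by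
  have hsign : (Equiv.Perm.sign (Fin.revPerm : Equiv.Perm (Fin (k + 1))) : R) ≠ 0 :=
    (Equiv.Perm.sign _).isUnit.map (Int.castRingHom R) |>.ne_zero
  simp only [det_of_sum_mul_pow_mul_pow, mul_ne_zero_iff, Finset.prod_ne_zero_iff,
    Finset.mem_univ, forall_const, det_vandermonde_ne_zero_iff, ne_eq, hsign, not_false_eq_true,
    true_and]
  tauto

end HomogeneousEvaluation

theorem stmt_4 (k : ℕ) (α : Fin (k + 1) → ℂ) (a b : Fin (k + 1) → ℂ) :
    Matrix.det (Matrix.of fun r s : Fin (k + 1) =>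
        ∑ i : Fin (k + 1), α i * a r ^ (k - (i : ℕ)) * b s ^ (i : ℕ)) ≠ 0 ↔
      (∀ i : Fin (k + 1), α i ≠ 0) ∧ Function.Injective a ∧ Function.Injective b :=
  det_of_sum_mul_pow_mul_pow_ne_zero_iff α a b
end

section
/- Let k ≥ 0, n = k+1, and a, b ∈ ℂ^n, and let p(x,y) = Σ_{i=0}^k (-1)^i x^{k-i} y^i. Then det([p(a_r,b_s)]_{r,s=1}^n) = Π_{1≤i<j≤n}(a_j - a_i) · Π_{1≤i<j≤n}(b_j - b_i). -/
/-!
Since `p(x, y) = ∑ⱼ xʲ (-y)ᵏ⁻ʲ`, the matrix factors as `V(a) · W(-b)ᵀ`, where `V(a)` is the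
Vandermonde matrix of `a` and `W(c)` is the Vandermonde matrix of `c` with its columns in reverse
order. Reversing both the rows and the columns of `W(c)` does not change its determinant and turns it
into the Vandermonde matrix of `c ∘ rev`, so `det W(-b) = ∏_{i<j} (b j - b i)` with no sign to track.
-/

open Matrix Finset

section

variable {R : Type*} [CommRing R] {n : ℕ}

lemma Matrix.det_vandermonde_eq_prod_ite_lt (v : Fin n → R) :
    det (vandermonde v) = ∏ i : Fin n, ∏ j : Fin n, if i < j then v j - v i else 1 := by
  rw [det_vandermonde]
  refine prod_congr rfl fun i _ => ?_
  rw [← prod_filter]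
  congr 1
  ext j
  simp

lemma Matrix.det_of_pow_rev (v : Fin n → R) :
    det (of fun i j : Fin n => v i ^ (j.rev : ℕ)) =
      ∏ i : Fin n, ∏ j : Fin n, if i < j then v i - v j else 1 := by
  have hrev : (of fun i j : Fin n => v i ^ (j.rev : ℕ)).submatrix Fin.revPerm Fin.revPerm =
      vandermonde (v ∘ Fin.rev) := by
    ext i j
    simp [vandermonde_apply, -Fin.val_rev]
  rw [← det_submatrix_equiv_self Fin.revPerm, hrev, det_vandermonde_eq_prod_ite_lt, prod_comm]
  refine Fintype.prod_equiv Fin.revPerm _ _ fun j => ?_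
  refine Fintype.prod_equiv Fin.revPerm _ _ fun i => ?_
  simp [Fin.rev_lt_rev]

lemma of_sum_alternating_eq_vandermonde_mul (k : ℕ) (a b : Fin (k + 1) → R) :
    (of fun r s : Fin (k + 1) =>
        ∑ i ∈ range (k + 1), (-1 : R) ^ i * a r ^ (k - i) * b s ^ i) =
      vandermonde a * (of fun s j : Fin (k + 1) => (-b s) ^ (j.rev : ℕ))ᵀ := by
  ext r s
  rw [of_apply, mul_apply, ← sum_range_reflect]
  simp only [vandermonde_apply, transpose_apply, of_apply, Fin.val_rev]
  rw [Fin.sum_univ_eq_sum_range (fun j => a r ^ j * (-b s) ^ (k + 1 - (j + 1)))]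
  refine sum_congr rfl fun i hi => ?_
  replace hi : i < k + 1 := mem_range.mp hi
  rw [show k + 1 - 1 - i = k - i by omega, show k - (k - i) = i by omega,
    show k + 1 - (i + 1) = k - i by omega, neg_pow]
  ring

end

theorem stmt_9 (k : ℕ) (a b : Fin (k + 1) → ℂ) :
    Matrix.det (Matrix.of fun r s : Fin (k + 1) =>
        ∑ i ∈ Finset.range (k + 1), (-1 : ℂ) ^ i * a r ^ (k - i) * b s ^ i) =
      (∏ i : Fin (k + 1), ∏ j : Fin (k + 1), if i < j then a j - a i else 1) *
        (∏ i : Fin (k + 1), ∏ j : Fin (k + 1), if i < j then b j - b i else 1) := by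
  rw [of_sum_alternating_eq_vandermonde_mul, det_mul, det_transpose, det_of_pow_rev,
    det_vandermonde_eq_prod_ite_lt]
  simp only [neg_sub_neg]
end

section
/- Let n = k+1, f(t) = Σ_{i=0}^k α_i t^i a univariate polynomial over ℂ with α_k ≠ 0, and a, b ∈ ℂ^n. Then det([f(a_r + b_s)]_{r,s=1}^n) = α_k^n · (-1)^{C(n,2)} · (Π_{i=0}^k C(k,i)) · Π_{1≤r<r'≤n}(a_{r'} - a_r) · Π_{1≤s<s'≤n}(b_{s'} - b_s). -/
/-!
Write `f(x + y) = ∑ⱼ xʲ (Dⱼ f)(y)` with `Dⱼ` the Hasse derivatives. Expanding `Dⱼ f` in powers of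
`y` factors the matrix as `V(a) · H · V(b)ᵀ` with Vandermonde matrices `V` and
`H j m = C(j+m, j) · α_{j+m}`. Since `deg f ≤ k`, `H` vanishes below its antidiagonal, where its
entries are `C(k, j) · α_k`; reversing the columns makes it triangular at the cost of the sign
`(-1)^C(k+1, 2)` of the reversal.
-/

open Finset Matrix Polynomial

theorem Fin.sign_revPerm (n : ℕ) :
    Equiv.Perm.sign (Fin.revPerm : Equiv.Perm (Fin n)) = (-1) ^ n.choose 2 := by
  have hinv : ∀ j : Fin n,
      ∏ i ∈ Iio j, (if i.rev < j.rev then 1 else -1 : ℤˣ) = (-1) ^ (j : ℕ) := fun j => by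
    rw [prod_congr rfl fun i hi => if_neg (Fin.rev_lt_rev.not.mpr (mem_Iio.mp hi).not_gt),
      Finset.prod_const, Fin.card_Iio]
  rw [Equiv.Perm.sign_eq_prod_prod_Iio]
  simp only [Fin.revPerm_apply, hinv]
  rw [prod_pow_eq_pow_sum, Fin.sum_univ_eq_sum_range (fun j => j) n, sum_range_id,
    Nat.choose_two_right]

namespace Matrix

variable {R : Type*} [CommRing R]

theorem det_of_upperAntiTriangular {n : ℕ} (M : Matrix (Fin n) (Fin n) R)
    (hM : ∀ i j : Fin n, n ≤ (i : ℕ) + j → M i j = 0) :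
    M.det = (-1) ^ n.choose 2 * ∏ i, M i i.rev := by
  have hU : (M.submatrix id Fin.revPerm).IsUpperTriangular := by
    intro i j (hji : (j : ℕ) < i)
    exact hM _ _ (by simp only [id, Fin.revPerm_apply, Fin.val_rev]; omega)
  have hperm := det_permute' Fin.revPerm M
  rw [det_of_isUpperTriangular hU, Fin.sign_revPerm] at hperm
  have hsign : ((-1 : R) ^ n.choose 2) * (-1) ^ n.choose 2 = 1 := by
    rw [← pow_add, ← two_mul, pow_mul, neg_one_sq, one_pow]
  calc M.det = (-1) ^ n.choose 2 * ((-1) ^ n.choose 2 * M.det) := by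
        rw [← mul_assoc, hsign, one_mul]
    _ = (-1) ^ n.choose 2 * ∏ i, M i i.rev := by
      push_cast at hperm
      rw [← hperm]
      rfl

theorem det_vandermonde_eq_prod_ite {n : ℕ} (v : Fin n → R) :
    (vandermonde v).det = ∏ i : Fin n, ∏ j : Fin n, if i < j then v j - v i else 1 := by
  rw [det_vandermonde]
  refine prod_congr rfl fun i _ => ?_
  rw [← prod_filter, filter_lt_eq_Ioi]

end Matrix

namespace Polynomial

variable {R : Type*} [CommRing R]

noncomputable def hasseDerivCoeffMatrix (n : ℕ) (p : R[X]) : Matrix (Fin n) (Fin n) R :=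
  Matrix.of fun j m => (hasseDeriv j p).coeff m

theorem eval_add_matrix_eq_vandermonde_mul {n : ℕ} {p : R[X]} (hp : p.natDegree < n)
    (a b : Fin n → R) :
    Matrix.of (fun r s => p.eval (a r + b s)) =
      vandermonde a * hasseDerivCoeffMatrix n p * (vandermonde b)ᵀ := by
  ext r s
  have hhasse : ∀ j : ℕ, (hasseDeriv j p).natDegree < n :=
    fun j => (natDegree_hasseDeriv_le p j).trans_lt (Nat.sub_le _ _ |>.trans_lt hp)
  simp only [of_apply, mul_apply, vandermonde_apply, transpose_apply, hasseDerivCoeffMatrix,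
    sum_mul]
  rw [← taylor_eval, eval_eq_sum_range' ((natDegree_taylor p (b s)).symm ▸ hp),
    ← Fin.sum_univ_eq_sum_range (fun j => (taylor (b s) p).coeff j * a r ^ j), sum_comm]
  refine sum_congr rfl fun j _ => ?_
  rw [taylor_coeff, eval_eq_sum_range' (hhasse j),
    ← Fin.sum_univ_eq_sum_range (fun m => (hasseDeriv j p).coeff m * b s ^ m), sum_mul]
  refine sum_congr rfl fun m _ => ?_
  ring

theorem det_hasseDerivCoeffMatrix {k : ℕ} {p : R[X]} (hp : p.natDegree ≤ k) :
    (hasseDerivCoeffMatrix (k + 1) p).det =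
      (-1) ^ (k + 1).choose 2 * p.coeff k ^ (k + 1) * ∏ i ∈ range (k + 1), (k.choose i : R) := by
  rw [det_of_upperAntiTriangular]
  · simp only [hasseDerivCoeffMatrix, of_apply, hasseDeriv_coeff]
    have hanti : ∀ i : Fin (k + 1), (i.rev : ℕ) + i = k := fun i => by
      rw [Fin.val_rev]; omega
    simp only [hanti]
    rw [prod_mul_distrib, Finset.prod_const, card_univ, Fintype.card_fin,
      Fin.prod_univ_eq_prod_range (fun i => (k.choose i : R))]
    ring
  · intro j m hjm
    simp only [hasseDerivCoeffMatrix, of_apply, hasseDeriv_coeff]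
    rw [coeff_eq_zero_of_natDegree_lt (by omega), mul_zero]

theorem det_eval_add {k : ℕ} {p : R[X]} (hp : p.natDegree ≤ k) (a b : Fin (k + 1) → R) :
    (Matrix.of fun r s => p.eval (a r + b s)).det =
      (-1) ^ (k + 1).choose 2 * p.coeff k ^ (k + 1) * (∏ i ∈ range (k + 1), (k.choose i : R)) *
        (vandermonde a).det * (vandermonde b).det := by
  rw [eval_add_matrix_eq_vandermonde_mul (Nat.lt_succ_of_le hp), det_mul, det_mul, det_transpose,
    det_hasseDerivCoeffMatrix hp]
  ring

end Polynomial

theorem stmt_14_general (k : ℕ) (α : Fin (k + 1) → ℂ)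
    (a b : Fin (k + 1) → ℂ) :
    Matrix.det (Matrix.of fun r s : Fin (k + 1) =>
        ∑ i : Fin (k + 1), α i * (a r + b s) ^ (i : ℕ)) =
      α (Fin.last k) ^ (k + 1) * (-1 : ℂ) ^ ((k + 1).choose 2) *
        (∏ i ∈ Finset.range (k + 1), (k.choose i : ℂ)) *
        (∏ r : Fin (k + 1), ∏ r' : Fin (k + 1), if r < r' then a r' - a r else 1) *
        (∏ s : Fin (k + 1), ∏ s' : Fin (k + 1), if s < s' then b s' - b s else 1) := by
  set p : ℂ[X] := ∑ i : Fin (k + 1), C (α i) * X ^ (i : ℕ)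
  have hdeg : p.natDegree ≤ k :=
    natDegree_sum_le_of_forall_le _ _ fun i _ => natDegree_C_mul_X_pow_le _ _ |>.trans i.is_le
  have hlead : p.coeff k = α (Fin.last k) := by
    rw [finsetSum_coeff, sum_eq_single (Fin.last k)]
    · simp
    · intro i _ hi
      rw [coeff_C_mul_X_pow, if_neg fun h => hi (Fin.ext h.symm)]
    · simp
  have heval : ∀ x, p.eval x = ∑ i : Fin (k + 1), α i * x ^ (i : ℕ) := fun x => by
    simp [p, eval_finsetSum]
  simp_rw [← heval, det_eval_add hdeg, hlead, ← det_vandermonde_eq_prod_ite]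
  ring

theorem stmt_14 (k : ℕ) (α : Fin (k + 1) → ℂ) (hα : α (Fin.last k) ≠ 0)
    (a b : Fin (k + 1) → ℂ) :
    Matrix.det (Matrix.of fun r s : Fin (k + 1) =>
        ∑ i : Fin (k + 1), α i * (a r + b s) ^ (i : ℕ)) =
      α (Fin.last k) ^ (k + 1) * (-1 : ℂ) ^ ((k + 1).choose 2) *
        (∏ i ∈ Finset.range (k + 1), (k.choose i : ℂ)) *
        (∏ r : Fin (k + 1), ∏ r' : Fin (k + 1), if r < r' then a r' - a r else 1) *
        (∏ s : Fin (k + 1), ∏ s' : Fin (k + 1), if s < s' then b s' - b s else 1) :=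
  stmt_14_general k α a b
end

section
/- Let n = k+1, f a univariate polynomial of degree k over ℂ, a, b ∈ ℂ^n. For any scalars c, d ∈ ℂ, det([f(c·a_r + d·b_s)]_{r,s=1}^n) = c^{C(n,2)} · d^{C(n,2)} · det([f(a_r + b_s)]_{r,s=1}^n). -/
/-!
Taylor expansion writes `f (x + y) = ∑ i j, (hasseDeriv j f).coeff i * x ^ i * y ^ j`, so for
`deg f < n` the matrix `[f (a r + b s)]` factors as `V(a) * H * V(b)ᵀ` with Vandermonde matrices
`V` and a matrix `H` depending only on `f`. Scaling the nodes of a Vandermonde matrix by `c`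
multiplies its column `j` by `c ^ j`, hence its determinant by `c ^ (0 + 1 + ⋯ + (n - 1))`.
-/

open Polynomial Matrix

variable {R : Type*} [CommRing R]

theorem Matrix.det_vandermonde_const_mul {n : ℕ} (e : R) (v : Fin n → R) :
    (vandermonde fun i => e * v i).det = e ^ n.choose 2 * (vandermonde v).det := by
  have hcol : (vandermonde fun i => e * v i) = of fun i (j : Fin n) => e ^ (j : ℕ) * vandermonde v i j := by
    ext i j
    simp only [vandermonde_apply, of_apply, mul_pow]
  rw [hcol, det_mul_row, Finset.prod_pow_eq_pow_sum,
    Fin.sum_univ_eq_sum_range (fun i => i) n, Finset.sum_range_id, Nat.choose_two_right]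

theorem Polynomial.eval_eq_sum_fin {p : R[X]} {n : ℕ} (hp : p.natDegree < n) (x : R) :
    p.eval x = ∑ i : Fin n, p.coeff i * x ^ (i : ℕ) := by
  rw [eval_eq_sum_range' hp, Fin.sum_univ_eq_sum_range (fun i => p.coeff i * x ^ i)]

theorem Polynomial.of_eval_add_eq_vandermonde_mul {n : ℕ} {f : R[X]} (hf : f.natDegree < n)
    (x y : Fin n → R) :
    (of fun r s => f.eval (x r + y s)) =
      vandermonde x * (of fun i j : Fin n => (hasseDeriv j f).coeff i) * (vandermonde y)ᵀ := by
  ext r s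
  have hderiv (j : Fin n) : (hasseDeriv j f).natDegree < n :=
    (natDegree_hasseDeriv_le f j).trans_lt (Nat.sub_le _ _ |>.trans_lt hf)
  calc f.eval (x r + y s)
      = (taylor (x r) f).eval (y s) := by rw [taylor_eval, add_comm]
    _ = ∑ j : Fin n, (hasseDeriv j f).eval (x r) * y s ^ (j : ℕ) := by
      simp only [eval_eq_sum_fin (natDegree_taylor f (x r) ▸ hf), taylor_coeff]
    _ = ∑ j : Fin n, (∑ i : Fin n, x r ^ (i : ℕ) * (hasseDeriv j f).coeff i) * y s ^ (j : ℕ) := by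
      simp only [eval_eq_sum_fin (hderiv _), mul_comm]
    _ = _ := by simp only [mul_apply, of_apply, transpose_apply, vandermonde_apply]

theorem Polynomial.det_of_eval_add {n : ℕ} {f : R[X]} (hf : f.natDegree < n) (x y : Fin n → R) :
    (of fun r s => f.eval (x r + y s)).det =
      (vandermonde x).det * (of fun i j : Fin n => (hasseDeriv j f).coeff i).det *
        (vandermonde y).det := by
  rw [of_eval_add_eq_vandermonde_mul hf, det_mul, det_mul, det_transpose]

theorem stmt_16 (k : ℕ) (f : Polynomial ℂ) (hf : f.natDegree = k)
    (a b : Fin (k + 1) → ℂ) (c d : ℂ) :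
    Matrix.det (Matrix.of fun r s : Fin (k + 1) => f.eval (c * a r + d * b s)) =
      c ^ ((k + 1).choose 2) * d ^ ((k + 1).choose 2) *
        Matrix.det (Matrix.of fun r s : Fin (k + 1) => f.eval (a r + b s)) := by
  have hdeg : f.natDegree < k + 1 := hf ▸ Nat.lt_succ_self k
  rw [det_of_eval_add hdeg (fun r => c * a r) (fun s => d * b s), det_of_eval_add hdeg a b,
    det_vandermonde_const_mul, det_vandermonde_const_mul]
  ring
end
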